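/- arXiv:2405.18197 — 2 statements merged into one kernel-verified Lean document; each statement's English description precedes it below -/
import Mathlib

section
/- For the 2×2 matrices U(X,T;λ) = (1/(2λ))·[[-iρ, -i u_X],[i v_X, iρ]] and V(X,T;λ) = [[-iλ, u],[v, iλ]], the zero curvature equation U_T - V_X + [U,V] = 0 holds for all λ ≠ 0 if and only if u_{XT} = -2uρ, v_{XT} = -2vρ, and ρ_T = -(uv)_X. -/
open Complex Matrix

noncomputable def pX (f : ℝ → ℝ → ℂ) (x t : ℝ) : ℂ := deriv (fun x' => f x' t) x
noncomputable def pT (f : ℝ → ℝ → ℂ) (x t : ℝ) : ℂ := deriv (fun t' => f x t') t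

noncomputable def Umat (u v ρ : ℝ → ℝ → ℂ) (lam : ℂ) (X T : ℝ) : Matrix (Fin 2) (Fin 2) ℂ :=
  (1 / (2 * lam)) • !![-I * ρ X T, -I * pX u X T; I * pX v X T, I * ρ X T]

noncomputable def Vmat (u v : ℝ → ℝ → ℂ) (lam : ℂ) (X T : ℝ) : Matrix (Fin 2) (Fin 2) ℂ :=
  !![-I * lam, u X T; v X T, I * lam]

lemma pT_cmul (c : ℂ) (g : ℝ → ℝ → ℂ) (x t : ℝ) :
    pT (fun X T => c * g X T) x t = c * pT g x t := by
  simp [pT, deriv_const_mul_field]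

lemma pX_const (c : ℂ) (x t : ℝ) : pX (fun _ _ => c) x t = 0 := by simp [pX]

set_option maxHeartbeats 1000000 in
theorem zero_curvature_iff (u v ρ : ℝ → ℝ → ℂ)
    (hu : ContDiff ℝ (⊤ : ℕ∞) (fun p : ℝ × ℝ => u p.1 p.2))
    (hv : ContDiff ℝ (⊤ : ℕ∞) (fun p : ℝ × ℝ => v p.1 p.2))
    (hρ : ContDiff ℝ (⊤ : ℕ∞) (fun p : ℝ × ℝ => ρ p.1 p.2)) :
    (∀ lam : ℂ, lam ≠ 0 → ∀ X T : ℝ,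
      (Matrix.of fun i j => pT (fun X T => Umat u v ρ lam X T i j) X T)
        - (Matrix.of fun i j => pX (fun X T => Vmat u v lam X T i j) X T)
        + (Umat u v ρ lam X T * Vmat u v lam X T - Vmat u v lam X T * Umat u v ρ lam X T) = 0)
    ↔ (∀ X T : ℝ,
        pT (pX u) X T = -2 * u X T * ρ X T ∧
        pT (pX v) X T = -2 * v X T * ρ X T ∧
        pT ρ X T = - pX (fun X T => u X T * v X T) X T) := by
  have hpXmul : ∀ X T, pX (fun X T => u X T * v X T) X T
      = pX u X T * v X T + u X T * pX v X T := by
    intro X T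
    have h1 : DifferentiableAt ℝ (fun x' => u x' T) X :=
      by have hd := hu.differentiable (by simp) (X, T); exact DifferentiableAt.comp (f := fun x : ℝ => (x, T)) X hd (by fun_prop)
    have h2 : DifferentiableAt ℝ (fun x' => v x' T) X :=
      by have hd := hv.differentiable (by simp) (X, T); exact DifferentiableAt.comp (f := fun x : ℝ => (x, T)) X hd (by fun_prop)
    simpa [pX, Pi.mul_def] using deriv_mul h1 h2
  have key : ∀ (lam : ℂ), lam ≠ 0 → ∀ (X T : ℝ),
      ((Matrix.of fun i j => pT (fun X T => Umat u v ρ lam X T i j) X T)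
        - (Matrix.of fun i j => pX (fun X T => Vmat u v lam X T i j) X T)
        + (Umat u v ρ lam X T * Vmat u v lam X T - Vmat u v lam X T * Umat u v ρ lam X T) = 0)
      ↔ (pT (pX u) X T = -2 * u X T * ρ X T ∧
         pT (pX v) X T = -2 * v X T * ρ X T ∧
         pT ρ X T = -(pX u X T * v X T + u X T * pX v X T)) := by
    intro lam hlam X T
    have hU00 : ∀ X T, Umat u v ρ lam X T 0 0 = 1/(2*lam) * -I * ρ X T := by
      intro X T; simp [Umat]; ring
    have hU01 : ∀ X T, Umat u v ρ lam X T 0 1 = 1/(2*lam) * -I * pX u X T := by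
      intro X T; simp [Umat]; ring
    have hU10 : ∀ X T, Umat u v ρ lam X T 1 0 = 1/(2*lam) * I * pX v X T := by
      intro X T; simp [Umat]; ring
    have hU11 : ∀ X T, Umat u v ρ lam X T 1 1 = 1/(2*lam) * I * ρ X T := by
      intro X T; simp [Umat]; ring
    have hV00 : ∀ X T, Vmat u v lam X T 0 0 = -I * lam := by intro X T; simp [Vmat]
    have hV01 : ∀ X T, Vmat u v lam X T 0 1 = u X T := by intro X T; simp [Vmat]
    have hV10 : ∀ X T, Vmat u v lam X T 1 0 = v X T := by intro X T; simp [Vmat]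
    have hV11 : ∀ X T, Vmat u v lam X T 1 1 = I * lam := by intro X T; simp [Vmat]
    have hetau : (fun (X T : ℝ) => u X T) = u := rfl
    have hetav : (fun (X T : ℝ) => v X T) = v := rfl
    constructor
    · intro h
      have he : ∀ i j, ((Matrix.of fun i j => pT (fun X T => Umat u v ρ lam X T i j) X T)
          - (Matrix.of fun i j => pX (fun X T => Vmat u v lam X T i j) X T)
          + (Umat u v ρ lam X T * Vmat u v lam X T - Vmat u v lam X T * Umat u v ρ lam X T)) i j
          = (0 : Matrix (Fin 2) (Fin 2) ℂ) i j := fun i j => by rw [h]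
      have e00 := he 0 0
      have e01 := he 0 1
      have e10 := he 1 0
      simp only [Matrix.add_apply, Matrix.sub_apply, Matrix.of_apply, Matrix.mul_apply,
        Fin.sum_univ_two, Matrix.zero_apply, hU00, hU01, hU10, hU11, hV00, hV01, hV10, hV11,
        pT_cmul, pX_const, hetau, hetav] at e00 e01 e10
      field_simp at e00 e01 e10
      have k1 : (-8 * I * lam^3) * (pT (pX u) X T + 2 * ρ X T * u X T) = 0 := by
        linear_combination 8 * lam^3 * e01 + (16 * lam^4 * pX u X T) * Complex.I_sq
      have k2 : (4 * I * lam^2) * (pT (pX v) X T + 2 * ρ X T * v X T) = 0 := by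
        linear_combination 4 * lam^2 * e10 + (8 * lam^3 * pX v X T) * Complex.I_sq
      have k3 : (-2 * I * lam) * (pT ρ X T + (pX u X T * v X T + u X T * pX v X T)) = 0 := by
        linear_combination 2 * lam * e00
      have hn1 : (-8 * I * lam^3 : ℂ) ≠ 0 := by
        simp [Complex.I_ne_zero, hlam, pow_ne_zero]
      have hn2 : (4 * I * lam^2 : ℂ) ≠ 0 := by
        simp [Complex.I_ne_zero, hlam, pow_ne_zero]
      have hn3 : (-2 * I * lam : ℂ) ≠ 0 := by
        simp [Complex.I_ne_zero, hlam]
      have g1 := (mul_eq_zero.mp k1).resolve_left hn1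
      have g2 := (mul_eq_zero.mp k2).resolve_left hn2
      have g3 := (mul_eq_zero.mp k3).resolve_left hn3
      exact ⟨by linear_combination g1, by linear_combination g2, by linear_combination g3⟩
    · rintro ⟨h1, h2, h3⟩
      apply Matrix.ext
      simp only [Fin.forall_fin_two]
      refine ⟨⟨?_, ?_⟩, ?_, ?_⟩
      · simp only [Matrix.add_apply, Matrix.sub_apply, Matrix.of_apply, Matrix.mul_apply,
          Fin.sum_univ_two, Matrix.zero_apply, hU00, hU01, hU10, hU11, hV00, hV01, hV10, hV11,
          pT_cmul, pX_const, hetau, hetav, h1, h2, h3]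
        field_simp
        ring
      · simp only [Matrix.add_apply, Matrix.sub_apply, Matrix.of_apply, Matrix.mul_apply,
          Fin.sum_univ_two, Matrix.zero_apply, hU00, hU01, hU10, hU11, hV00, hV01, hV10, hV11,
          pT_cmul, pX_const, hetau, hetav, h1, h2, h3]
        field_simp
        linear_combination (-2 * lam * pX u X T) * Complex.I_sq
      · simp only [Matrix.add_apply, Matrix.sub_apply, Matrix.of_apply, Matrix.mul_apply,
          Fin.sum_univ_two, Matrix.zero_apply, hU00, hU01, hU10, hU11, hV00, hV01, hV10, hV11,
          pT_cmul, pX_const, hetau, hetav, h1, h2, h3]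
        field_simp
        linear_combination (-2 * lam * pX v X T) * Complex.I_sq
      · simp only [Matrix.add_apply, Matrix.sub_apply, Matrix.of_apply, Matrix.mul_apply,
          Fin.sum_univ_two, Matrix.zero_apply, hU00, hU01, hU10, hU11, hV00, hV01, hV10, hV11,
          pT_cmul, pX_const, hetau, hetav, h1, h2, h3]
        field_simp
        ring
  constructor
  · intro h X T
    have hk := (key 1 one_ne_zero X T).mp (h 1 one_ne_zero X T)
    exact ⟨hk.1, hk.2.1, by rw [hk.2.2, hpXmul]⟩
  · intro h lam hlam X T
    have hh := h X T
    exact (key lam hlam X T).mpr ⟨hh.1, hh.2.1, by rw [hh.2.2, hpXmul]⟩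
end

section
/- The one-soliton hodograph relation x⁽¹⁾(X,T) = X - i(λ₁+λ₂) - i(λ₁-λ₂)·tanh( i(λ₁-λ₂)X/(2λ₁λ₂) - i(λ₁-λ₂)T ) agrees with the Darboux formula x⁽¹⁾ = X + 2i(φ₂ψ₁λ₂ - φ₁ψ₂λ₁)/(ψ₂φ₁ - ψ₁φ₂) up to an additive constant; precisely, for φⱼ = Aⱼ e^{-iX/(2λⱼ)-iλⱼT}, ψⱼ = Bⱼ e^{iX/(2λⱼ)+iλⱼT} with A₁=A₂=B₁=1, B₂=-1, one has 2i(φ₂ψ₁λ₂ - φ₁ψ₂λ₁)/(ψ₂φ₁ - ψ₁φ₂) = -i(λ₁+λ₂) - i(λ₁-λ₂)·tanh( i(λ₁-λ₂)X/(2λ₁λ₂) - i(λ₁-λ₂)T ). -/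
open Complex

noncomputable def ctanh (z : ℂ) : ℂ :=
  (Complex.exp z - Complex.exp (-z)) / (Complex.exp z + Complex.exp (-z))

/-! With `a`, `b` the Lax phases at `λ₁`, `λ₂` one has `φ₁ = e⁻ᵃ`, `ψ₁ = eᵃ`, `φ₂ = e⁻ᵇ`,
`ψ₂ = -eᵇ`, so the Darboux quotient is `-2i (λ₁ eᶻ + λ₂ e⁻ᶻ) / (eᶻ + e⁻ᶻ)` with `z = b - a`,
which is exactly the tanh argument of the hodograph relation. A weighted average of `e^{±z}` is
the midpoint `(λ₁ + λ₂)/2` shifted by `(λ₁ - λ₂)/2 · tanh z`. -/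

theorem mul_exp_add_mul_exp_neg_div (c d z : ℂ) (hz : exp z + exp (-z) ≠ 0) :
    (c * exp z + d * exp (-z)) / (exp z + exp (-z)) = (c + d + (c - d) * ctanh z) / 2 := by
  rw [ctanh]
  field_simp
  ring

noncomputable def laxPhase (lam : ℂ) (X T : ℝ) : ℂ := I * X / (2 * lam) + I * lam * T

theorem laxPhase_sub_laxPhase {lam₁ lam₂ : ℂ} (h1 : lam₁ ≠ 0) (h2 : lam₂ ≠ 0) (X T : ℝ) :
    laxPhase lam₂ X T - laxPhase lam₁ X T
      = I * (lam₁ - lam₂) * X / (2 * lam₁ * lam₂) - I * (lam₁ - lam₂) * T := by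
  unfold laxPhase
  field_simp
  ring

theorem darboux_quotient_exp (lam₁ lam₂ a b : ℂ)
    (hz : exp (b - a) + exp (-(b - a)) ≠ 0) :
    2 * I * (exp (-b) * exp a * lam₂ - exp (-a) * -exp b * lam₁)
        / (-exp b * exp (-a) - exp a * exp (-b))
      = -I * (lam₁ + lam₂) - I * (lam₁ - lam₂) * ctanh (b - a) := by
  have hplus : exp (-a) * exp b = exp (b - a) := by
    rw [← exp_add]; ring_nf
  have hminus : exp (-b) * exp a = exp (-(b - a)) := by
    rw [← exp_add]; ring_nf
  have hnum : exp (-b) * exp a * lam₂ - exp (-a) * -exp b * lam₁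
      = lam₁ * exp (b - a) + lam₂ * exp (-(b - a)) := by
    rw [← hplus, ← hminus]; ring
  have hden : -exp b * exp (-a) - exp a * exp (-b) = -(exp (b - a) + exp (-(b - a))) := by
    rw [← hplus, ← hminus]; ring
  rw [hnum, hden, div_neg, mul_div_assoc, mul_exp_add_mul_exp_neg_div _ _ _ hz]
  ring

theorem hodograph_closed_form_general (lam₁ lam₂ : ℂ) (h1 : lam₁ ≠ 0) (h2 : lam₂ ≠ 0)
    (X T : ℝ)
    (φ₁ ψ₁ φ₂ ψ₂ : ℂ)
    (hφ₁ : φ₁ = Complex.exp (-(I * X) / (2 * lam₁) - I * lam₁ * T))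
    (hψ₁ : ψ₁ = Complex.exp ((I * X) / (2 * lam₁) + I * lam₁ * T))
    (hφ₂ : φ₂ = Complex.exp (-(I * X) / (2 * lam₂) - I * lam₂ * T))
    (hψ₂ : ψ₂ = -Complex.exp ((I * X) / (2 * lam₂) + I * lam₂ * T))
    (htanh : Complex.exp (I * (lam₁ - lam₂) * X / (2 * lam₁ * lam₂) - I * (lam₁ - lam₂) * T)
      + Complex.exp (-(I * (lam₁ - lam₂) * X / (2 * lam₁ * lam₂) - I * (lam₁ - lam₂) * T)) ≠ 0) :
    2 * I * (φ₂ * ψ₁ * lam₂ - φ₁ * ψ₂ * lam₁) / (ψ₂ * φ₁ - ψ₁ * φ₂)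
      = -I * (lam₁ + lam₂) - I * (lam₁ - lam₂)
          * ctanh (I * (lam₁ - lam₂) * X / (2 * lam₁ * lam₂) - I * (lam₁ - lam₂) * T) := by
  have hneg (lam : ℂ) : -(I * X) / (2 * lam) - I * lam * T = -laxPhase lam X T := by
    unfold laxPhase; ring
  rw [hneg] at hφ₁ hφ₂
  rw [← laxPhase_sub_laxPhase h1 h2] at htanh ⊢
  subst hφ₁ hψ₁ hφ₂ hψ₂
  exact darboux_quotient_exp lam₁ lam₂ _ _ htanh

theorem hodograph_closed_form (lam₁ lam₂ : ℂ) (h1 : lam₁ ≠ 0) (h2 : lam₂ ≠ 0)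
    (hne : lam₁ ≠ lam₂) (X T : ℝ)
    (φ₁ ψ₁ φ₂ ψ₂ : ℂ)
    (hφ₁ : φ₁ = Complex.exp (-(I * X) / (2 * lam₁) - I * lam₁ * T))
    (hψ₁ : ψ₁ = Complex.exp ((I * X) / (2 * lam₁) + I * lam₁ * T))
    (hφ₂ : φ₂ = Complex.exp (-(I * X) / (2 * lam₂) - I * lam₂ * T))
    (hψ₂ : ψ₂ = -Complex.exp ((I * X) / (2 * lam₂) + I * lam₂ * T))
    (hden : ψ₂ * φ₁ - ψ₁ * φ₂ ≠ 0)
    (htanh : Complex.exp (I * (lam₁ - lam₂) * X / (2 * lam₁ * lam₂) - I * (lam₁ - lam₂) * T)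
      + Complex.exp (-(I * (lam₁ - lam₂) * X / (2 * lam₁ * lam₂) - I * (lam₁ - lam₂) * T)) ≠ 0) :
    2 * I * (φ₂ * ψ₁ * lam₂ - φ₁ * ψ₂ * lam₁) / (ψ₂ * φ₁ - ψ₁ * φ₂)
      = -I * (lam₁ + lam₂) - I * (lam₁ - lam₂)
          * ctanh (I * (lam₁ - lam₂) * X / (2 * lam₁ * lam₂) - I * (lam₁ - lam₂) * T) :=
  hodograph_closed_form_general lam₁ lam₂ h1 h2 X T φ₁ ψ₁ φ₂ ψ₂ hφ₁ hψ₁ hφ₂ hψ₂ htanh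
end
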